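/- Fix θ' ∈ (−1,0)∪(0,∞). The function θ ↦ θ·H_{1+θ,1+θ'}(X|Y), extended by the value 0 at θ=0, is concave on (−1,∞), and it is strictly concave on (−1,∞) if and only if V(X|Y) > 0. -/

import Mathlib

/-!
With `z := log (P_XY / P_Y^{(1+θ')})`, the function is `θ ↦ -log ∑ P_XY e^{θ z}` summed over the
support of `P_XY`: minus a cumulant generating function. Its second derivative is minus the
variance of `z` under the exponentially tilted weights, so it is concave, and strictly concave
iff `z` is not constant on the support. If either `z` or `log (P_XY / P_Y)` is constant on the
support, every conditional distribution `P_{X|Y=y}` is uniform on its support, and then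
`z = log D + log (P_XY / P_Y) / (1 + θ')` for a constant `D`. Hence `z` is non-constant iff
`log (P_XY / P_Y)` is, i.e. iff its variance `V(X|Y)` is positive.
-/

open Real Filter

/-- Marginal distribution on `𝒴`. -/
noncomputable def margY {𝒳 𝒴 : Type*} [Fintype 𝒳] (P : 𝒳 × 𝒴 → ℝ) (y : 𝒴) : ℝ :=
  ∑ x : 𝒳, P (x, y)

/-- The optimizing distribution `P_Y^{(1+θ')}`. -/
noncomputable def tiltY {𝒳 𝒴 : Type*} [Fintype 𝒳] [Fintype 𝒴]
    (P : 𝒳 × 𝒴 → ℝ) (θ' : ℝ) (y : 𝒴) : ℝ :=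
  (∑ x : 𝒳, P (x, y) ^ (1 + θ')) ^ (1 / (1 + θ'))
    / ∑ y' : 𝒴, (∑ x : 𝒳, P (x, y') ^ (1 + θ')) ^ (1 / (1 + θ'))

/-- `θ · H_{1+θ,1+θ'}(X|Y) = θ · H_{1+θ}(P_{XY}|P_Y^{(1+θ')})`
(which equals `0` at `θ = 0`). -/
noncomputable def thetaCondRenyiTwo {𝒳 𝒴 : Type*} [Fintype 𝒳] [Fintype 𝒴]
    (P : 𝒳 × 𝒴 → ℝ) (θ θ' : ℝ) : ℝ :=
  -Real.log (∑ x : 𝒳, ∑ y : 𝒴,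
    if 0 < P (x, y) then P (x, y) ^ (1 + θ) * tiltY P θ' y ^ (-θ) else 0)

/-- Conditional entropy `H(X|Y)`. -/
noncomputable def condEnt {𝒳 𝒴 : Type*} [Fintype 𝒳] [Fintype 𝒴]
    (P : 𝒳 × 𝒴 → ℝ) : ℝ :=
  -∑ x : 𝒳, ∑ y : 𝒴,
    if 0 < P (x, y) then P (x, y) * Real.log (P (x, y) / margY P y) else 0

/-- Conditional varentropy `V(X|Y)`. -/
noncomputable def condVarEnt {𝒳 𝒴 : Type*} [Fintype 𝒳] [Fintype 𝒴]
    (P : 𝒳 × 𝒴 → ℝ) : ℝ :=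
  (∑ x : 𝒳, ∑ y : 𝒴,
    if 0 < P (x, y) then P (x, y) * (Real.log (P (x, y) / margY P y)) ^ 2 else 0)
  - (condEnt P) ^ 2

open Finset

section WeightedVariance

variable {ι : Type*} (s : Finset ι) (w f : ι → ℝ)

theorem sum_mul_mul_sum_mul_sq_sub_sq :
    (∑ i ∈ s, w i) * ((∑ i ∈ s, w i) * ∑ i ∈ s, w i * f i ^ 2 - (∑ i ∈ s, w i * f i) ^ 2)
      = ∑ i ∈ s, w i * ((∑ j ∈ s, w j) * f i - ∑ j ∈ s, w j * f j) ^ 2 := by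
  set W := ∑ j ∈ s, w j
  set A := ∑ j ∈ s, w j * f j
  have expand : ∀ i ∈ s, w i * (W * f i - A) ^ 2
      = W ^ 2 * (w i * f i ^ 2) - 2 * W * A * (w i * f i) + A ^ 2 * w i := fun i _ => by ring
  rw [sum_congr rfl expand, sum_add_distrib, sum_sub_distrib, ← mul_sum, ← mul_sum, ← mul_sum]
  ring

variable {s w}

theorem sum_mul_mul_sum_mul_sq_sub_sq_nonneg (hw : ∀ i ∈ s, 0 < w i) :
    0 ≤ (∑ i ∈ s, w i) * ∑ i ∈ s, w i * f i ^ 2 - (∑ i ∈ s, w i * f i) ^ 2 := by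
  rcases s.eq_empty_or_nonempty with rfl | hs
  · simp
  have hW : 0 < ∑ i ∈ s, w i := sum_pos hw hs
  refine nonneg_of_mul_nonneg_right ?_ hW
  rw [sum_mul_mul_sum_mul_sq_sub_sq]
  exact sum_nonneg fun i hi => mul_nonneg (hw i hi).le (sq_nonneg _)

theorem sum_mul_mul_sum_mul_sq_sub_sq_pos_iff (hw : ∀ i ∈ s, 0 < w i) :
    0 < (∑ i ∈ s, w i) * ∑ i ∈ s, w i * f i ^ 2 - (∑ i ∈ s, w i * f i) ^ 2
      ↔ ∃ a ∈ s, ∃ b ∈ s, f a ≠ f b := by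
  rcases s.eq_empty_or_nonempty with rfl | hs
  · simp
  set W := ∑ j ∈ s, w j
  set A := ∑ j ∈ s, w j * f j
  have hW : 0 < W := sum_pos hw hs
  rw [← mul_pos_iff_of_pos_left hW, sum_mul_mul_sum_mul_sq_sub_sq,
    sum_pos_iff_of_nonneg fun i hi => mul_nonneg (hw i hi).le (sq_nonneg _)]
  have term_pos : ∀ i ∈ s, 0 < w i * (W * f i - A) ^ 2 ↔ W * f i ≠ A := fun i hi => by
    rw [mul_pos_iff_of_pos_left (hw i hi), sq_pos_iff, sub_ne_zero]
  constructor
  · rintro ⟨i, hi, hpos⟩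
    by_contra! hconst
    refine (term_pos i hi).1 hpos ?_
    calc W * f i = ∑ j ∈ s, w j * f i := sum_mul _ _ _
      _ = A := sum_congr rfl fun j hj => by rw [hconst i hi j hj]
  · rintro ⟨a, ha, b, hb, hab⟩
    rcases ne_or_eq (W * f a) A with h | h
    · exact ⟨a, ha, (term_pos a ha).2 h⟩
    · exact ⟨b, hb, (term_pos b hb).2 fun h' => hab (mul_left_cancel₀ hW.ne' (h.trans h'.symm))⟩

end WeightedVariance

section LogSumExp

variable {ι : Type*} (s : Finset ι) (w z : ι → ℝ)

noncomputable def expMoment (n : ℕ) (t : ℝ) : ℝ :=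
  ∑ i ∈ s, w i * exp (t * z i) * z i ^ n

theorem hasDerivAt_expMoment (n : ℕ) (t : ℝ) :
    HasDerivAt (expMoment s w z n) (expMoment s w z (n + 1) t) t := by
  refine HasDerivAt.fun_sum fun i _ => ?_
  exact ((((hasDerivAt_mul_const (z i)).exp).const_mul (w i)).mul_const (z i ^ n)).congr_deriv
    (by ring)

@[simp]
theorem expMoment_zero_apply (t : ℝ) : expMoment s w z 0 t = ∑ i ∈ s, w i * exp (t * z i) := by
  simp [expMoment]

variable {s w}

theorem expMoment_zero_pos (hw : ∀ i ∈ s, 0 < w i) (hs : s.Nonempty) (t : ℝ) :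
    0 < expMoment s w z 0 t := by
  rw [expMoment_zero_apply]
  exact sum_pos (fun i hi => mul_pos (hw i hi) (exp_pos _)) hs

theorem hasDerivAt_deriv_neg_log_expMoment (hw : ∀ i ∈ s, 0 < w i) (hs : s.Nonempty) (t : ℝ) :
    HasDerivAt (deriv fun t => -log (expMoment s w z 0 t))
      (-((expMoment s w z 0 t * expMoment s w z 2 t - expMoment s w z 1 t ^ 2)
        / expMoment s w z 0 t ^ 2)) t := by
  have hM := expMoment_zero_pos z hw hs
  have hderiv : deriv (fun t => -log (expMoment s w z 0 t))
      = fun t => -(expMoment s w z 1 t / expMoment s w z 0 t) :=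
    funext fun t => (((hasDerivAt_expMoment s w z 0 t).log (hM t).ne').neg).deriv
  rw [hderiv]
  exact (((hasDerivAt_expMoment s w z 1 t).div (hasDerivAt_expMoment s w z 0 t)
    (hM t).ne').neg).congr_deriv (by ring)

theorem deriv2_neg_log_sum_mul_exp (hw : ∀ i ∈ s, 0 < w i) (hs : s.Nonempty) (t : ℝ) :
    deriv^[2] (fun t => -log (∑ i ∈ s, w i * exp (t * z i))) t
      = -(((∑ i ∈ s, w i * exp (t * z i)) * ∑ i ∈ s, w i * exp (t * z i) * z i ^ 2
          - (∑ i ∈ s, w i * exp (t * z i) * z i) ^ 2) / (∑ i ∈ s, w i * exp (t * z i)) ^ 2) := by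
  have h := (hasDerivAt_deriv_neg_log_expMoment z hw hs t).deriv
  simpa [expMoment] using h

theorem differentiable_neg_log_sum_mul_exp (hw : ∀ i ∈ s, 0 < w i) (hs : s.Nonempty) :
    Differentiable ℝ (fun t => -log (∑ i ∈ s, w i * exp (t * z i))) := by
  simp only [← expMoment_zero_apply]
  exact fun t => (((hasDerivAt_expMoment s w z 0 t).log
    (expMoment_zero_pos z hw hs t).ne').neg).differentiableAt

theorem concaveOn_neg_log_sum_mul_exp (hw : ∀ i ∈ s, 0 < w i) (hs : s.Nonempty) :
    ConcaveOn ℝ Set.univ (fun t => -log (∑ i ∈ s, w i * exp (t * z i))) := by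
  refine concaveOn_univ_of_deriv2_nonpos (differentiable_neg_log_sum_mul_exp z hw hs) ?_
    fun t => ?_
  · simp only [← expMoment_zero_apply]
    exact fun t => (hasDerivAt_deriv_neg_log_expMoment z hw hs t).differentiableAt
  · rw [deriv2_neg_log_sum_mul_exp z hw hs, neg_nonpos]
    exact div_nonneg (sum_mul_mul_sum_mul_sq_sub_sq_nonneg z fun i hi =>
      mul_pos (hw i hi) (exp_pos _)) (sq_nonneg _)

theorem strictConcaveOn_neg_log_sum_mul_exp_iff (hw : ∀ i ∈ s, 0 < w i) (hs : s.Nonempty)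
    {D : Set ℝ} (hD : Convex ℝ D) (hD' : D.Nontrivial) :
    StrictConcaveOn ℝ D (fun t => -log (∑ i ∈ s, w i * exp (t * z i)))
      ↔ ∃ a ∈ s, ∃ b ∈ s, z a ≠ z b := by
  constructor
  · intro hstrict
    by_contra! hconst
    obtain ⟨i₀, hi₀⟩ := hs
    have haffine : ∀ t, -log (∑ i ∈ s, w i * exp (t * z i))
        = -log (∑ i ∈ s, w i) - t * z i₀ := fun t => by
      rw [sum_congr rfl fun i hi => by rw [hconst i hi i₀ hi₀], ← sum_mul,
        log_mul (sum_pos hw ⟨i₀, hi₀⟩).ne' (exp_pos _).ne', log_exp]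
      ring
    obtain ⟨x, hx, y, hy, hxy⟩ := hD'
    have hmid := hstrict.2 hx hy hxy (by norm_num : (0 : ℝ) < 1 / 2) (by norm_num : (0 : ℝ) < 1 / 2)
      (by norm_num)
    simp only [haffine, smul_eq_mul] at hmid
    linarith
  · intro hz
    refine (strictConcaveOn_univ_of_deriv2_neg
      (differentiable_neg_log_sum_mul_exp z hw hs).continuous fun t => ?_).subset
      (Set.subset_univ D) hD
    rw [deriv2_neg_log_sum_mul_exp z hw hs, neg_lt_zero]
    have hv : ∀ i ∈ s, 0 < w i * exp (t * z i) := fun i hi => mul_pos (hw i hi) (exp_pos _)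
    exact div_pos ((sum_mul_mul_sum_mul_sq_sub_sq_pos_iff z hv).2 hz)
      (pow_pos (sum_pos hv hs) 2)

end LogSumExp

theorem rpow_one_add_mul_rpow_neg {a b : ℝ} (ha : 0 < a) (hb : 0 < b) (θ : ℝ) :
    a ^ (1 + θ) * b ^ (-θ) = a * exp (θ * log (a / b)) := by
  rw [rpow_add ha, rpow_one, rpow_neg hb.le, mul_assoc, ← div_eq_mul_inv, ← div_rpow ha.le hb.le,
    rpow_def_of_pos (div_pos ha hb), mul_comm θ]

section Support

variable {ι : Type*} [Fintype ι]

noncomputable def posSupport (P : ι → ℝ) : Finset ι := {p | 0 < P p}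

@[simp]
theorem mem_posSupport {P : ι → ℝ} {p : ι} : p ∈ posSupport P ↔ 0 < P p := by
  simp [posSupport]

theorem sum_posSupport {P : ι → ℝ} (hP0 : ∀ p, 0 ≤ P p) : ∑ p ∈ posSupport P, P p = ∑ p, P p :=
  sum_filter_of_ne fun p _ hp => (hP0 p).lt_of_ne' hp

end Support

section ConditionalDistributions

variable {𝒳 𝒴 : Type*} {P : 𝒳 × 𝒴 → ℝ}

noncomputable def logRatio (P : 𝒳 × 𝒴 → ℝ) (Q : 𝒴 → ℝ) (p : 𝒳 × 𝒴) : ℝ :=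
  log (P p / Q p.2)

def CondUniform (P : 𝒳 × 𝒴 → ℝ) : Prop :=
  ∀ ⦃x x' y⦄, 0 < P (x, y) → 0 < P (x', y) → P (x, y) = P (x', y)

variable [Fintype 𝒳]

theorem margY_pos (hP0 : ∀ p, 0 ≤ P p) {x : 𝒳} {y : 𝒴} (h : 0 < P (x, y)) : 0 < margY P y :=
  h.trans_le (single_le_sum (fun x' _ => hP0 (x', y)) (mem_univ x))

theorem sum_comp_eq_card_mul (hP0 : ∀ p, 0 ≤ P p) {F : ℝ → ℝ} (hF : F 0 = 0) {x₀ : 𝒳} {y : 𝒴}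
    (hu : ∀ x, 0 < P (x, y) → P (x, y) = P (x₀, y)) :
    ∑ x, F (P (x, y)) = #{x | 0 < P (x, y)} * F (P (x₀, y)) := by
  have hsupp : ∀ x, F (P (x, y)) ≠ 0 → 0 < P (x, y) := fun x hx =>
    (hP0 _).lt_of_ne' fun h0 => hx (by rw [h0, hF])
  rw [← sum_filter_of_ne fun x _ => hsupp x, sum_congr rfl fun x hx => by
    rw [hu x (mem_filter.1 hx).2], sum_const, nsmul_eq_mul]

theorem CondUniform.logRatio_margY (hu : CondUniform P) (hP0 : ∀ p, 0 ≤ P p) {x : 𝒳} {y : 𝒴}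
    (h : 0 < P (x, y)) :
    logRatio P (margY P) (x, y) = -log #{x' | 0 < P (x', y)} := by
  have hmarg : margY P y = #{x' | 0 < P (x', y)} * P (x, y) :=
    sum_comp_eq_card_mul hP0 (F := id) rfl fun _ hx' => hu hx' h
  rw [logRatio, hmarg, div_mul_cancel_right₀ h.ne', log_inv]

theorem sum_rpow_rpow_pos (hP0 : ∀ p, 0 ≤ P p) (θ' : ℝ) {x : 𝒳} {y : 𝒴} (h : 0 < P (x, y)) :
    0 < (∑ x' : 𝒳, P (x', y) ^ (1 + θ')) ^ (1 / (1 + θ')) :=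
  rpow_pos_of_pos (sum_pos' (fun x' _ => rpow_nonneg (hP0 (x', y)) _)
    ⟨x, mem_univ x, rpow_pos_of_pos h _⟩) _

variable [Fintype 𝒴]

theorem sum_sum_ite_pos_eq_sum_posSupport (F : 𝒳 × 𝒴 → ℝ) :
    (∑ x : 𝒳, ∑ y : 𝒴, if 0 < P (x, y) then F (x, y) else 0) = ∑ p ∈ posSupport P, F p := by
  rw [posSupport, sum_filter, Fintype.sum_prod_type]

theorem sum_sum_rpow_rpow_pos (hP0 : ∀ p, 0 ≤ P p) (θ' : ℝ) {x : 𝒳} {y : 𝒴} (h : 0 < P (x, y)) :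
    0 < ∑ y' : 𝒴, (∑ x' : 𝒳, P (x', y') ^ (1 + θ')) ^ (1 / (1 + θ')) :=
  sum_pos' (fun y' _ => rpow_nonneg (sum_nonneg fun x' _ => rpow_nonneg (hP0 (x', y')) _) _)
    ⟨y, mem_univ y, sum_rpow_rpow_pos hP0 θ' h⟩

theorem tiltY_pos (hP0 : ∀ p, 0 ≤ P p) (θ' : ℝ) {x : 𝒳} {y : 𝒴} (h : 0 < P (x, y)) :
    0 < tiltY P θ' y :=
  div_pos (sum_rpow_rpow_pos hP0 θ' h) (sum_sum_rpow_rpow_pos hP0 θ' h)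

theorem CondUniform.logRatio_tiltY (hu : CondUniform P) (hP0 : ∀ p, 0 ≤ P p) {θ' : ℝ}
    (hθ' : 1 + θ' ≠ 0) {x : 𝒳} {y : 𝒴} (h : 0 < P (x, y)) :
    logRatio P (tiltY P θ') (x, y)
      = log (∑ y' : 𝒴, (∑ x' : 𝒳, P (x', y') ^ (1 + θ')) ^ (1 / (1 + θ')))
        + logRatio P (margY P) (x, y) / (1 + θ') := by
  rw [hu.logRatio_margY hP0 h]
  set N : ℝ := ((#{x' | 0 < P (x', y)} : ℕ) : ℝ)
  have hN : 0 < N := Nat.cast_pos.2 (card_pos.2 ⟨x, by simpa using h⟩)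
  have hsum : ∑ x', P (x', y) ^ (1 + θ') = N * P (x, y) ^ (1 + θ') :=
    sum_comp_eq_card_mul hP0 (F := (· ^ (1 + θ'))) (zero_rpow hθ') fun _ hx' => hu hx' h
  have hnum : (∑ x', P (x', y) ^ (1 + θ')) ^ (1 / (1 + θ')) = N ^ (1 / (1 + θ')) * P (x, y) := by
    rw [hsum, mul_rpow hN.le (rpow_nonneg h.le _), one_div, rpow_rpow_inv h.le hθ']
  rw [logRatio, tiltY, hnum, div_div_eq_mul_div, mul_comm (P (x, y)),
    mul_div_mul_right _ _ h.ne', log_div (sum_sum_rpow_rpow_pos hP0 θ' h).ne'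
      (rpow_pos_of_pos hN _).ne', log_rpow hN]
  ring

theorem thetaCondRenyiTwo_eq_neg_log_sum_exp (hP0 : ∀ p, 0 ≤ P p) (θ θ' : ℝ) :
    thetaCondRenyiTwo P θ θ'
      = -log (∑ p ∈ posSupport P, P p * exp (θ * logRatio P (tiltY P θ') p)) := by
  rw [thetaCondRenyiTwo,
    sum_sum_ite_pos_eq_sum_posSupport (fun p => P p ^ (1 + θ) * tiltY P θ' p.2 ^ (-θ))]
  refine congrArg (fun r => -log r) (sum_congr rfl fun ⟨x, y⟩ hp => ?_)
  have hp : 0 < P (x, y) := mem_posSupport.1 hp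
  exact rpow_one_add_mul_rpow_neg hp (tiltY_pos hP0 θ' hp) θ

theorem condVarEnt_eq (hP1 : ∑ p ∈ posSupport P, P p = 1) :
    condVarEnt P = (∑ p ∈ posSupport P, P p) * ∑ p ∈ posSupport P, P p * logRatio P (margY P) p ^ 2
      - (∑ p ∈ posSupport P, P p * logRatio P (margY P) p) ^ 2 := by
  rw [condVarEnt, condEnt, hP1, one_mul, neg_sq,
    sum_sum_ite_pos_eq_sum_posSupport (fun p => P p * log (P p / margY P p.2) ^ 2),
    sum_sum_ite_pos_eq_sum_posSupport (fun p => P p * log (P p / margY P p.2))]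
  rfl

theorem condVarEnt_pos_iff (hP0 : ∀ p, 0 ≤ P p) (hP1 : ∑ p, P p = 1) :
    0 < condVarEnt P ↔ ∃ a ∈ posSupport P, ∃ b ∈ posSupport P,
      logRatio P (margY P) a ≠ logRatio P (margY P) b := by
  rw [condVarEnt_eq ((sum_posSupport hP0).trans hP1)]
  exact sum_mul_mul_sum_mul_sq_sub_sq_pos_iff _ fun p hp => mem_posSupport.1 hp

theorem CondUniform.logRatio_tiltY_eq_iff (hu : CondUniform P) (hP0 : ∀ p, 0 ≤ P p) {θ' : ℝ}
    (hθ' : 1 + θ' ≠ 0) {a b : 𝒳 × 𝒴} (ha : a ∈ posSupport P) (hb : b ∈ posSupport P) :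
    logRatio P (tiltY P θ') a = logRatio P (tiltY P θ') b
      ↔ logRatio P (margY P) a = logRatio P (margY P) b := by
  rw [hu.logRatio_tiltY hP0 hθ' (mem_posSupport.1 ha),
    hu.logRatio_tiltY hP0 hθ' (mem_posSupport.1 hb), add_right_inj, div_left_inj' hθ']

theorem condUniform_of_forall_logRatio_eq {Q : 𝒴 → ℝ}
    (hQ : ∀ x y, 0 < P (x, y) → 0 < Q y)
    (h : ∀ a ∈ posSupport P, ∀ b ∈ posSupport P, logRatio P Q a = logRatio P Q b) :
    CondUniform P := fun x _ y hx hx' =>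
  (div_left_inj' (hQ x y hx).ne').1 <| log_injOn_pos (div_pos hx (hQ x y hx))
    (div_pos hx' (hQ x y hx)) (h _ (mem_posSupport.2 hx) _ (mem_posSupport.2 hx'))

theorem exists_logRatio_tiltY_ne_iff (hP0 : ∀ p, 0 ≤ P p) {θ' : ℝ} (hθ' : 1 + θ' ≠ 0) :
    (∃ a ∈ posSupport P, ∃ b ∈ posSupport P,
      logRatio P (tiltY P θ') a ≠ logRatio P (tiltY P θ') b)
    ↔ ∃ a ∈ posSupport P, ∃ b ∈ posSupport P,
      logRatio P (margY P) a ≠ logRatio P (margY P) b := by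
  rw [← not_iff_not]
  push Not
  constructor
  · intro h a ha b hb
    exact ((condUniform_of_forall_logRatio_eq (fun _ _ => tiltY_pos hP0 θ') h).logRatio_tiltY_eq_iff
      hP0 hθ' ha hb).1 (h a ha b hb)
  · intro h a ha b hb
    exact ((condUniform_of_forall_logRatio_eq (fun _ _ => margY_pos hP0) h).logRatio_tiltY_eq_iff
      hP0 hθ' ha hb).2 (h a ha b hb)

end ConditionalDistributions

theorem thetaCondRenyiTwo_concave_iff {𝒳 𝒴 : Type*} [Fintype 𝒳] [Fintype 𝒴]
    (P : 𝒳 × 𝒴 → ℝ) (hP0 : ∀ p, 0 ≤ P p) (hP1 : ∑ p : 𝒳 × 𝒴, P p = 1)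
    (θ' : ℝ) (hθ' : θ' ∈ Set.Ioo (-1 : ℝ) 0 ∪ Set.Ioi 0) :
    ConcaveOn ℝ (Set.Ioi (-1 : ℝ)) (fun θ => thetaCondRenyiTwo P θ θ')
    ∧ (StrictConcaveOn ℝ (Set.Ioi (-1 : ℝ)) (fun θ => thetaCondRenyiTwo P θ θ')
        ↔ 0 < condVarEnt P) := by
  have hθ'1 : 1 + θ' ≠ 0 := by
    rcases hθ' with ⟨h, -⟩ | h
    · linarith
    · linarith [Set.mem_Ioi.1 h]
  have hw : ∀ p ∈ posSupport P, 0 < P p := fun p hp => mem_posSupport.1 hp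
  have hs : (posSupport P).Nonempty :=
    nonempty_of_sum_ne_zero (((sum_posSupport hP0).trans hP1).symm ▸ one_ne_zero)
  have hf : (fun θ => thetaCondRenyiTwo P θ θ')
      = fun θ => -log (∑ p ∈ posSupport P, P p * exp (θ * logRatio P (tiltY P θ') p)) :=
    funext fun θ => thetaCondRenyiTwo_eq_neg_log_sum_exp hP0 θ θ'
  rw [hf, strictConcaveOn_neg_log_sum_mul_exp_iff _ hw hs (convex_Ioi _)
    (Set.Ioi_infinite _).nontrivial, exists_logRatio_tiltY_ne_iff hP0 hθ'1,
    condVarEnt_pos_iff hP0 hP1]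
  exact ⟨(concaveOn_neg_log_sum_mul_exp _ hw hs).subset (Set.subset_univ _) (convex_Ioi _), Iff.rfl⟩
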